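/- Let x₁,…,xₙ ∈ ℝᵈ (not all equal) satisfy the ℓ₂² triangle inequalities. Define the probability distribution p_{kl} = ‖xₖ−xₗ‖² / Σ_{i<j}‖xᵢ−xⱼ‖² and P = Σ_{k<l} p_{kl}(xₖ−xₗ)(xₖ−xₗ)ᵀ. Then the embedding g(xᵢ) = P^{1/2}xᵢ satisfies Σ_{i<j} ‖g(xᵢ)−g(xⱼ)‖ ≥ (1/√d) Σ_{i<j} ‖xᵢ−xⱼ‖², i.e., it has average distortion at most √d. -/

import Mathlib

open Matrix Finset Filter Topology

/-!
Write `y_q` for the difference vectors, `s_q = ‖y_q‖²` and `S = ∑ s_q`. For positive definite `Q`,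
Cauchy–Schwarz in the inner product `uᵀQv` gives `s_q² ≤ (y_qᵀQy_q)(y_qᵀQ⁻¹y_q)`, while
`∑ s_q y_qᵀQ⁻¹y_q = S tr(Q⁻¹P)`, which is at most `dS` for `Q = P + δI`. Hölder's inequality (convexity
of `t ↦ t^{-1/2}`) combines the two into `S ≤ √d ∑ √(y_qᵀQy_q)`, and letting `δ → 0` gives the same
bound with `P`, where `√(y_qᵀPy_q) = ‖P^{1/2}y_q‖`.
-/

open scoped ComplexOrder in
/-- The older Mathlib's `Matrix.PosSemidef.sqrt` (removed since), with its old definition. -/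
noncomputable def Matrix.PosSemidef.sqrt {n 𝕜 : Type*} [Fintype n] [RCLike 𝕜] [DecidableEq n]
    {A : Matrix n n 𝕜} (hA : A.PosSemidef) : Matrix n n 𝕜 :=
  hA.1.eigenvectorUnitary.1 * diagonal ((↑) ∘ (√·) ∘ hA.1.eigenvalues) *
  (star hA.1.eigenvectorUnitary : Matrix n n 𝕜)

/-- Hölder's inequality with exponents `3/2` and `3`, in the shape needed for the Jensen step. -/
theorem Real.sum_le_sqrt_mul_sum_sqrt_of_sq_le_mul {ι : Type*} [Fintype ι] {s a b : ι → ℝ} {d : ℝ}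
    (hs : ∀ i, 0 ≤ s i) (ha : ∀ i, 0 ≤ a i) (hb : ∀ i, 0 ≤ b i) (hd : 0 ≤ d)
    (hsab : ∀ i, s i ^ 2 ≤ a i * b i) (hsb : ∑ i, s i * b i ≤ d * ∑ i, s i) :
    ∑ i, s i ≤ √d * ∑ i, √(a i) := by
  set S := ∑ i, s i
  set A := ∑ i, √(a i)
  set B := ∑ i, s i * √(b i)
  have hS0 : 0 ≤ S := sum_nonneg fun i _ => hs i
  have hB : B ≤ √d * S := calc
    B = ∑ i, √(s i) * (√(s i) * √(b i)) := by
      simp only [B, ← mul_assoc, Real.mul_self_sqrt (hs _)]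
    _ ≤ √(∑ i, √(s i) ^ 2) * √(∑ i, (√(s i) * √(b i)) ^ 2) :=
      Real.sum_mul_le_sqrt_mul_sqrt _ _ _
    _ = √S * √(∑ i, s i * b i) := by
      simp only [mul_pow, Real.sq_sqrt (hs _), Real.sq_sqrt (hb _), S]
    _ ≤ √S * √(d * S) := by gcongr
    _ = √d * S := by
      rw [Real.sqrt_mul hd, mul_left_comm, Real.mul_self_sqrt hS0]
  have hSAB : S ≤ √A * √B := calc
    S ≤ ∑ i, √(√(a i)) * √(s i * √(b i)) := by
      refine sum_le_sum fun i _ => ?_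
      rw [← Real.sqrt_mul (Real.sqrt_nonneg _)]
      refine Real.le_sqrt_of_sq_le ?_
      rw [mul_left_comm, sq]
      refine mul_le_mul_of_nonneg_left ?_ (hs i)
      rw [← Real.sqrt_mul (ha i)]
      exact Real.le_sqrt_of_sq_le (hsab i)
    _ ≤ √A * √B := Real.sum_sqrt_mul_sqrt_le _ (fun i => Real.sqrt_nonneg _)
      (fun i => mul_nonneg (hs i) (Real.sqrt_nonneg _))
  have hSS : S * S ≤ √d * A * S := calc
    S * S ≤ (√A * √B) ^ 2 := by rw [← sq]; gcongr
    _ = A * B := by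
      rw [mul_pow, Real.sq_sqrt (sum_nonneg fun i _ => Real.sqrt_nonneg _),
        Real.sq_sqrt (sum_nonneg fun i _ => mul_nonneg (hs i) (Real.sqrt_nonneg _))]
    _ ≤ A * (√d * S) := by gcongr
    _ = √d * A * S := by ring
  rcases hS0.eq_or_lt with hS | hS
  · rw [← hS]; positivity
  · exact le_of_mul_le_mul_right hSS hS

namespace Matrix

open scoped ComplexOrder

section RCLike

variable {n 𝕜 : Type*} [Fintype n] [RCLike 𝕜] [DecidableEq n] {A : Matrix n n 𝕜}

theorem PosSemidef.sqrt_mul_self (hA : A.PosSemidef) : hA.sqrt * hA.sqrt = A := by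
  set U : Matrix n n 𝕜 := hA.1.eigenvectorUnitary.1
  set U' : Matrix n n 𝕜 := (star hA.1.eigenvectorUnitary : Matrix n n 𝕜)
  have hU : U' * U = 1 := Unitary.coe_star_mul_self _
  have hspec := hA.1.spectral_theorem
  rw [Unitary.conjStarAlgAut_apply] at hspec
  conv_rhs => rw [hspec]
  simp only [PosSemidef.sqrt]
  calc _ = U * (diagonal ((↑) ∘ (√·) ∘ hA.1.eigenvalues) * (U' * U) *
        diagonal ((↑) ∘ (√·) ∘ hA.1.eigenvalues)) * U' := by
        simp only [U, U', Matrix.mul_assoc]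
    _ = _ := by
        rw [hU, Matrix.mul_one, diagonal_mul_diagonal]
        congr 3
        funext i
        simp [← RCLike.ofReal_mul, Real.mul_self_sqrt (hA.eigenvalues_nonneg i)]

theorem PosSemidef.isHermitian_sqrt (hA : A.PosSemidef) : hA.sqrt.IsHermitian := by
  unfold IsHermitian PosSemidef.sqrt
  rw [conjTranspose_mul, conjTranspose_mul, diagonal_conjTranspose, star_eq_conjTranspose,
    conjTranspose_conjTranspose, Matrix.mul_assoc]
  congr 2
  ext i j
  simp [diagonal_apply]

end RCLike

section Real

variable {n : Type*} [Fintype n]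

theorem dotProduct_sq_le_dotProduct_self_mul (u v : n → ℝ) :
    (u ⬝ᵥ v) ^ 2 ≤ (u ⬝ᵥ u) * (v ⬝ᵥ v) := by
  simpa only [dotProduct, sq] using sum_mul_sq_le_sq_mul_sq univ u v

theorem trace_mul_sum_smul_vecMulVec {ι : Type*} [Fintype ι] (B : Matrix n n ℝ) (w : ι → ℝ)
    (y : ι → n → ℝ) :
    (B * ∑ i, w i • vecMulVec (y i) (y i)).trace = ∑ i, w i * (y i ⬝ᵥ B *ᵥ y i) := by
  simp only [Matrix.mul_sum, trace_sum, Matrix.mul_smul, trace_smul, mul_vecMulVec, trace_vecMulVec,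
    smul_eq_mul, dotProduct_comm]

variable [DecidableEq n] {A : Matrix n n ℝ}

theorem PosSemidef.sqrt_mulVec_dotProduct_sqrt_mulVec (hA : A.PosSemidef) (u v : n → ℝ) :
    (hA.sqrt *ᵥ u) ⬝ᵥ (hA.sqrt *ᵥ v) = u ⬝ᵥ A *ᵥ v := by
  have hT : hA.sqrtᵀ = hA.sqrt := by
    simpa only [IsHermitian, conjTranspose_eq_transpose_of_trivial] using hA.isHermitian_sqrt
  rw [← vecMul_transpose, hT, ← dotProduct_mulVec, mulVec_mulVec, hA.sqrt_mul_self]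

theorem PosSemidef.dotProduct_mulVec_sq_le (hA : A.PosSemidef) (u v : n → ℝ) :
    (u ⬝ᵥ A *ᵥ v) ^ 2 ≤ (u ⬝ᵥ A *ᵥ u) * (v ⬝ᵥ A *ᵥ v) := by
  simpa only [hA.sqrt_mulVec_dotProduct_sqrt_mulVec] using
    dotProduct_sq_le_dotProduct_self_mul (hA.sqrt *ᵥ u) (hA.sqrt *ᵥ v)

theorem PosDef.dotProduct_self_sq_le (hA : A.PosDef) (y : n → ℝ) :
    (y ⬝ᵥ y) ^ 2 ≤ (y ⬝ᵥ A *ᵥ y) * (y ⬝ᵥ A⁻¹ *ᵥ y) := by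
  have hAA : A *ᵥ (A⁻¹ *ᵥ y) = y := by
    rw [mulVec_mulVec, mul_nonsing_inv _ hA.det_pos.ne'.isUnit, one_mulVec]
  have h := hA.posSemidef.dotProduct_mulVec_sq_le y (A⁻¹ *ᵥ y)
  rwa [hAA, dotProduct_comm (A⁻¹ *ᵥ y)] at h

theorem PosSemidef.trace_inv_add_smul_one_mul_le (hA : A.PosSemidef) {δ : ℝ} (hδ : 0 < δ) :
    ((A + δ • 1)⁻¹ * A).trace ≤ Fintype.card n := by
  set Q := A + δ • 1
  have hQ : Q.PosDef := PosDef.posSemidef_add hA (PosDef.one.smul hδ)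
  have hinv_mul : Q⁻¹ * A = 1 - δ • Q⁻¹ := by
    rw [show A = Q - δ • 1 from (add_sub_cancel_right _ _).symm, Matrix.mul_sub,
      nonsing_inv_mul _ hQ.det_pos.ne'.isUnit, Matrix.mul_smul, Matrix.mul_one]
  rw [hinv_mul, trace_sub, trace_one, trace_smul, smul_eq_mul]
  linarith [mul_nonneg hδ.le hQ.inv.posSemidef.trace_nonneg]

theorem sum_dotProduct_self_le_sqrt_card_mul_sum_sqrt {ι : Type*} [Fintype ι] (y : ι → n → ℝ)
    (hA : A.PosSemidef)
    (hA_def : A = ∑ i, ((y i ⬝ᵥ y i) / ∑ j, y j ⬝ᵥ y j) • vecMulVec (y i) (y i)) :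
    ∑ i, y i ⬝ᵥ y i ≤ √(Fintype.card n) * ∑ i, √(y i ⬝ᵥ A *ᵥ y i) := by
  set S := ∑ i, y i ⬝ᵥ y i
  have hy : ∀ i, 0 ≤ y i ⬝ᵥ y i := fun i => dotProduct_self_star_nonneg (y i)
  have hS0 : 0 ≤ S := sum_nonneg fun i _ => hy i
  rcases hS0.eq_or_lt with hS | hS
  · rw [← hS]; positivity
  have hregularized : ∀ δ : ℝ, 0 < δ →
      S ≤ √(Fintype.card n) * ∑ i, √(y i ⬝ᵥ (A + δ • 1) *ᵥ y i) := by
    intro δ hδ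
    have hQ : (A + δ • 1).PosDef := PosDef.posSemidef_add hA (PosDef.one.smul hδ)
    have htr := hA.trace_inv_add_smul_one_mul_le hδ
    set Q := A + δ • 1
    refine Real.sum_le_sqrt_mul_sum_sqrt_of_sq_le_mul hy
      (fun i => hQ.posSemidef.dotProduct_mulVec_nonneg (y i))
      (fun i => hQ.inv.posSemidef.dotProduct_mulVec_nonneg (y i)) (Nat.cast_nonneg _)
      (fun i => hQ.dotProduct_self_sq_le (y i)) ?_
    calc ∑ i, (y i ⬝ᵥ y i) * (y i ⬝ᵥ Q⁻¹ *ᵥ y i)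
        = S * (Q⁻¹ * A).trace := by
          rw [hA_def, trace_mul_sum_smul_vecMulVec, mul_sum]
          refine sum_congr rfl fun i _ => ?_
          field_simp
      _ ≤ S * Fintype.card n := by gcongr
      _ = Fintype.card n * S := mul_comm _ _
  have hlim : Tendsto (fun δ : ℝ => √(Fintype.card n) * ∑ i, √(y i ⬝ᵥ (A + δ • 1) *ᵥ y i))
      (𝓝[>] 0) (𝓝 (√(Fintype.card n) * ∑ i, √(y i ⬝ᵥ A *ᵥ y i))) := by
    have hcont : Continuous fun δ : ℝ =>
        √(Fintype.card n) * ∑ i, √(y i ⬝ᵥ A *ᵥ y i + δ * (y i ⬝ᵥ y i)) := by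
      fun_prop
    simpa only [add_mulVec, smul_mulVec, one_mulVec, dotProduct_add, dotProduct_smul, smul_eq_mul,
      zero_mul, add_zero] using (hcont.tendsto 0).mono_left nhdsWithin_le_nhds
  exact ge_of_tendsto hlim (eventually_nhdsWithin_of_forall hregularized)

end Real

end Matrix

theorem stmt10_general (n d : ℕ) (x : Fin n → Fin d → ℝ)
    (p : Fin n → Fin n → ℝ)
    (hpdef : ∀ k l, p k l = ((x k - x l) ⬝ᵥ (x k - x l)) /
      ∑ q : {q : Fin n × Fin n // q.1 < q.2}, (x q.1.1 - x q.1.2) ⬝ᵥ (x q.1.1 - x q.1.2))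
    (P : Matrix (Fin d) (Fin d) ℝ)
    (hPdef : P = ∑ q : {q : Fin n × Fin n // q.1 < q.2},
      p q.1.1 q.1.2 • vecMulVec (x q.1.1 - x q.1.2) (x q.1.1 - x q.1.2))
    (hP : P.PosSemidef) :
    ∑ q : {q : Fin n × Fin n // q.1 < q.2},
        Real.sqrt (hP.sqrt.mulVec (x q.1.1 - x q.1.2) ⬝ᵥ hP.sqrt.mulVec (x q.1.1 - x q.1.2)) ≥
      (1 / Real.sqrt d) * ∑ q : {q : Fin n × Fin n // q.1 < q.2},
        (x q.1.1 - x q.1.2) ⬝ᵥ (x q.1.1 - x q.1.2) := by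
  simp only [hpdef] at hPdef
  have h := sum_dotProduct_self_le_sqrt_card_mul_sum_sqrt
    (fun q : {q : Fin n × Fin n // q.1 < q.2} => x q.1.1 - x q.1.2) hP hPdef
  rw [Fintype.card_fin] at h
  simp only [hP.sqrt_mulVec_dotProduct_sqrt_mulVec, one_div_mul_eq_div, ge_iff_le]
  exact div_le_of_le_mul₀ (Real.sqrt_nonneg _) (sum_nonneg fun _ _ => Real.sqrt_nonneg _)
    (by rwa [mul_comm] at h)

/-- Average-distortion `√d` version of Goemans' theorem via the squared-length
distribution `p_{kl} ∝ ‖xₖ−xₗ‖²`, with `g(xᵢ) = P^{1/2}xᵢ`. -/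
theorem stmt10 (n d : ℕ) (x : Fin n → Fin d → ℝ)
    (htri : ∀ i j k, (x i - x j) ⬝ᵥ (x i - x j) + (x j - x k) ⬝ᵥ (x j - x k) ≥
      (x i - x k) ⬝ᵥ (x i - x k))
    (hne : ∃ i j, x i ≠ x j)
    (p : Fin n → Fin n → ℝ)
    (hpdef : ∀ k l, p k l = ((x k - x l) ⬝ᵥ (x k - x l)) /
      ∑ q : {q : Fin n × Fin n // q.1 < q.2}, (x q.1.1 - x q.1.2) ⬝ᵥ (x q.1.1 - x q.1.2))
    (P : Matrix (Fin d) (Fin d) ℝ)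
    (hPdef : P = ∑ q : {q : Fin n × Fin n // q.1 < q.2},
      p q.1.1 q.1.2 • vecMulVec (x q.1.1 - x q.1.2) (x q.1.1 - x q.1.2))
    (hP : P.PosSemidef) :
    ∑ q : {q : Fin n × Fin n // q.1 < q.2},
        Real.sqrt (hP.sqrt.mulVec (x q.1.1 - x q.1.2) ⬝ᵥ hP.sqrt.mulVec (x q.1.1 - x q.1.2)) ≥
      (1 / Real.sqrt d) * ∑ q : {q : Fin n × Fin n // q.1 < q.2},
        (x q.1.1 - x q.1.2) ⬝ᵥ (x q.1.1 - x q.1.2) :=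
  stmt10_general n d x p hpdef P hPdef hP
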